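/- arXiv:2401.04987 — 2 statements merged into one kernel-verified Lean document; each statement's English description precedes it below -/
import Mathlib

section
/- Let R = k⟦x,y⟧/(x²) and for n ≥ 1 let φ_n be the 2×2 matrix ((x, y^n),(0, -x)) over R with M_n = coker φ_n. Then the annihilator of stableHom_R(M_n, M_n) equals the ideal (x, y^n)R. -/
open CategoryTheory IsLocalRing

universe u

variable (R : Type u) [CommRing R]

/-- The submodule of `Hom_R(M,N)` consisting of maps factoring through a projective module. -/
def projStable (M N : Type u) [AddCommGroup M] [Module R M] [AddCommGroup N] [Module R N] :
    Submodule R (M →ₗ[R] N) where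
  carrier := {f | ∃ (P : Type u) (_ : AddCommGroup P) (_ : Module R P)
    (_ : Module.Projective R P) (g : M →ₗ[R] P) (h : P →ₗ[R] N), f = h.comp g}
  zero_mem' := ⟨PUnit, inferInstance, inferInstance, inferInstance, 0, 0, by ext x; simp⟩
  add_mem' := by
    rintro f f' ⟨P, _, _, _, g, h, rfl⟩ ⟨P', _, _, _, g', h', rfl⟩
    exact ⟨P × P', inferInstance, inferInstance, inferInstance, g.prod g',
      h.comp (LinearMap.fst R P P') + h'.comp (LinearMap.snd R P P'), by ext x; simp⟩
  smul_mem' := by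
    rintro r f ⟨P, _, _, _, g, h, rfl⟩
    exact ⟨P, inferInstance, inferInstance, inferInstance, g, r • h, by ext x; simp⟩

/-- The stable hom module `Hom_R(M,N)/P_R(M,N)`. -/
def stableHom (M N : Type u) [AddCommGroup M] [Module R M] [AddCommGroup N] [Module R N] :=
  (M →ₗ[R] N) ⧸ projStable R M N

noncomputable instance (M N : Type u) [AddCommGroup M] [Module R M] [AddCommGroup N]
    [Module R N] : AddCommGroup (stableHom R M N) :=
  inferInstanceAs (AddCommGroup ((M →ₗ[R] N) ⧸ projStable R M N))

noncomputable instance (M N : Type u) [AddCommGroup M] [Module R M] [AddCommGroup N]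
    [Module R N] : Module R (stableHom R M N) :=
  inferInstanceAs (Module R ((M →ₗ[R] N) ⧸ projStable R M N))

/-- `Ann(M)`: the annihilator of the stable endomorphism module of `M`. -/
noncomputable def stAnn (M : Type u) [AddCommGroup M] [Module R M] : Ideal R :=
  Module.annihilator R (stableHom R M M)

/-- `Ext_R^n(M,N)` as an `R`-module. -/
noncomputable abbrev ExtM (n : ℕ) (M : ModuleCat.{u} R) (N : ModuleCat.{u} R) :
    ModuleCat.{u} R :=
  ((Ext R (ModuleCat.{u} R) n).obj (Opposite.op M)).obj N

/-- `ca^n(R)`, the `n`-th cohomology annihilator ideal. -/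
noncomputable def ca (n : ℕ) : Ideal R :=
  ⨅ (m : ℕ) (_ : n ≤ m) (M : ModuleCat.{u} R) (N : ModuleCat.{u} R)
    (_ : Module.Finite R M) (_ : Module.Finite R N),
    Module.annihilator R (ExtM R m M N)


/-- The one-dimensional A-infinity hypersurface `k⟦x,y⟧/(x²)`. -/
noncomputable abbrev Ainf (k : Type u) [Field k] : Type u :=
  (MvPowerSeries (Fin 2) k) ⧸
    (Ideal.span {(MvPowerSeries.X (0 : Fin 2) : MvPowerSeries (Fin 2) k) ^ 2})

/-- The image of `x` in `k⟦x,y⟧/(x²)`. -/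
noncomputable def ax (k : Type u) [Field k] : Ainf k :=
  Ideal.Quotient.mk _ (MvPowerSeries.X 0)

/-- The image of `y` in `k⟦x,y⟧/(x²)`. -/
noncomputable def ay (k : Type u) [Field k] : Ainf k :=
  Ideal.Quotient.mk _ (MvPowerSeries.X 1)

/-!
For `M = coker Φ` with `Φ = ((x, y), (0, -x))` and `x² = 0`, multiplication by `x` and by `y`
on `M` factor through `R²` via the matrices `((x, y), (0, 0))` and `((0, 0), (x, y))`, which
kill `Φ` and differ from `x • 1`, `y • 1` by multiples `Φ δ`. Conversely, if `r • id_M` factors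
through a projective, it lifts to an endomorphism `A` of `R²` killing the image of `Φ` with
`A - r • 1` landing in it. Evaluating at `e₀`, where `Φ e₀ = x e₀`, gives `x (r + y w) = 0`
for some `w`. Since `x` is a non-zero-divisor of `k⟦x,y⟧`, its annihilator in `k⟦x,y⟧/(x²)`
is `(x)`, so `r ∈ (x, y)`.
-/

variable {R}

section StableHom

variable {M N Q : Type u} [AddCommGroup M] [Module R M] [AddCommGroup N] [Module R N]
  [AddCommGroup Q] [Module R Q]

lemma comp_mem_projStable (f : N →ₗ[R] Q) {g : M →ₗ[R] N} (hg : g ∈ projStable R M N) :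
    f.comp g ∈ projStable R M Q := by
  obtain ⟨P, _, _, _, a, b, rfl⟩ := hg
  exact ⟨P, inferInstance, inferInstance, inferInstance, a, f.comp b, rfl⟩

lemma mem_stAnn_iff (r : R) : r ∈ stAnn R M ↔ r • LinearMap.id ∈ projStable R M M := by
  rw [stAnn, Module.mem_annihilator]
  refine ⟨fun hr => ?_, fun h m => ?_⟩
  · exact (Submodule.Quotient.mk_eq_zero _).1 (hr (Submodule.Quotient.mk LinearMap.id))
  · obtain ⟨f, rfl⟩ := Submodule.Quotient.mk_surjective (projStable R M M) m
    show r • (Submodule.Quotient.mk f : (M →ₗ[R] M) ⧸ projStable R M M) = 0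
    have hf : r • f = f ∘ₗ (r • LinearMap.id) := by ext; simp
    rw [← Submodule.Quotient.mk_smul, Submodule.Quotient.mk_eq_zero, hf]
    exact comp_mem_projStable f h

end StableHom

section Cokernel

variable {ι : Type} [Fintype ι] [DecidableEq ι] (Φ : Matrix ι ι R)

abbrev Matrix.coker : Type u := (ι → R) ⧸ LinearMap.range Φ.toLin'

lemma smul_id_mem_projStable_coker (γ δ : Matrix ι ι R) (r : R) (hγΦ : γ * Φ = 0)
    (hγ : γ = r • 1 + Φ * δ) :
    (r • LinearMap.id : Φ.coker →ₗ[R] Φ.coker) ∈ projStable R Φ.coker Φ.coker := by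
  set N := LinearMap.range Φ.toLin'
  have hker : N ≤ LinearMap.ker γ.toLin' := by
    rintro _ ⟨v, rfl⟩
    rw [LinearMap.mem_ker, Matrix.toLin'_apply, Matrix.toLin'_apply, Matrix.mulVec_mulVec, hγΦ,
      Matrix.zero_mulVec]
  refine ⟨ι → R, inferInstance, inferInstance, inferInstance, N.liftQ γ.toLin' hker, N.mkQ, ?_⟩
  refine Submodule.linearMap_qext _ (LinearMap.ext fun v => ?_)
  have hγv : γ.toLin' v = r • v + Φ.toLin' (δ.toLin' v) := by
    simp [hγ, Matrix.mulVec_mulVec]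
  show r • N.mkQ v = N.mkQ (γ.toLin' v)
  have hΦδv : N.mkQ (Φ.toLin' (δ.toLin' v)) = 0 := (Submodule.Quotient.mk_eq_zero N).2 ⟨_, rfl⟩
  rw [hγv, map_add, map_smul, hΦδv, add_zero]

lemma exists_lift_of_smul_id_mem_projStable_coker (r : R)
    (hr : (r • LinearMap.id : Φ.coker →ₗ[R] Φ.coker) ∈ projStable R Φ.coker Φ.coker) :
    ∃ A : (ι → R) →ₗ[R] (ι → R), (∀ v, A (Φ.toLin' v) = 0) ∧
      ∀ v, A v - r • v ∈ LinearMap.range Φ.toLin' := by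
  set N := LinearMap.range Φ.toLin'
  obtain ⟨P, _, _, _, g, h, hgh⟩ := hr
  obtain ⟨H, hH⟩ := Module.projective_lifting_property N.mkQ h N.mkQ_surjective
  refine ⟨H ∘ₗ g ∘ₗ N.mkQ, fun v => ?_, fun v => ?_⟩
  · have hv : N.mkQ (Φ.toLin' v) = 0 := (Submodule.Quotient.mk_eq_zero N).2 ⟨v, rfl⟩
    rw [LinearMap.comp_apply, LinearMap.comp_apply, hv, map_zero, map_zero]
  · have hA : N.mkQ (H (g (N.mkQ v))) = N.mkQ (r • v) := by
      rw [← LinearMap.comp_apply N.mkQ H, hH, ← LinearMap.comp_apply h g, ← hgh]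
      simp
    rw [← Submodule.Quotient.mk_eq_zero, Submodule.Quotient.mk_sub]
    exact sub_eq_zero.2 hA

lemma exists_mul_add_mul_eq_zero_of_smul_id_mem_projStable_coker (x y r : R) (hx : x * x = 0)
    (hr : (r • LinearMap.id : (!![x, y; 0, -x]).coker →ₗ[R] _) ∈
      projStable R (!![x, y; 0, -x]).coker (!![x, y; 0, -x]).coker) :
    ∃ w, x * (r + y * w) = 0 := by
  obtain ⟨A, hAΦ, hA⟩ := exists_lift_of_smul_id_mem_projStable_coker !![x, y; 0, -x] r hr
  obtain ⟨w, hw⟩ := hA (Pi.single 0 1)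
  have hΦe₀ : (!![x, y; 0, -x]).toLin' (Pi.single 0 1) = x • Pi.single 0 1 := by
    ext i; fin_cases i <;> simp
  have hxA : x * A (Pi.single 0 1) 0 = 0 := by
    simpa [hΦe₀] using congrFun (hAΦ (Pi.single 0 1)) 0
  have hw₀ : x * w 0 + y * w 1 = A (Pi.single 0 1) 0 - r := by
    simpa [Matrix.mulVec, dotProduct, Fin.sum_univ_two] using congrFun hw 0
  exact ⟨w 1, by linear_combination x * hw₀ + hxA - w 0 * hx⟩

theorem stAnn_coker_eq_span_pair (x y : R) (hx : x * x = 0)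
    (hann : ∀ s, x * s = 0 → s ∈ Ideal.span {x}) :
    stAnn R (!![x, y; 0, -x]).coker = Ideal.span {x, y} := by
  refine le_antisymm (fun r hr => ?_) (Ideal.span_le.2 ?_)
  · obtain ⟨w, hw⟩ := exists_mul_add_mul_eq_zero_of_smul_id_mem_projStable_coker x y r hx
      ((mem_stAnn_iff r).1 hr)
    obtain ⟨c, hc⟩ := Ideal.mem_span_singleton'.1 (hann _ hw)
    exact Ideal.mem_span_pair.2 ⟨c, -w, by linear_combination hc⟩
  · rintro s (rfl | rfl)
    · refine (mem_stAnn_iff _).2 (smul_id_mem_projStable_coker _ !![s, y; 0, 0] !![0, 0; 0, 1] s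
        ?_ ?_) <;> ext i j <;> fin_cases i <;> fin_cases j <;> simp [hx, mul_comm]
    · refine (mem_stAnn_iff _).2 (smul_id_mem_projStable_coker _ !![0, 0; x, s] !![0, 0; -1, 0] s
        ?_ ?_) <;> ext i j <;> fin_cases i <;> fin_cases j <;> simp [hx, mul_comm]

end Cokernel

lemma mem_span_mk_of_mk_mul_eq_zero {A : Type*} [CommRing A] {a : A} (ha : IsLeftRegular a)
    {s : A ⧸ Ideal.span {a ^ 2}} (h : Ideal.Quotient.mk _ a * s = 0) :
    s ∈ Ideal.span {Ideal.Quotient.mk _ a} := by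
  obtain ⟨f, rfl⟩ := Ideal.Quotient.mk_surjective s
  rw [← map_mul, Ideal.Quotient.eq_zero_iff_mem, Ideal.mem_span_singleton'] at h
  obtain ⟨g, hg⟩ := h
  have hf : g * a = f := ha (by linear_combination hg)
  exact Ideal.mem_span_singleton'.2 ⟨Ideal.Quotient.mk _ g, by rw [← hf, map_mul]⟩

theorem stmt7_general (k : Type u) [Field k] (n : ℕ) :
    stAnn (Ainf k) ((Fin 2 → Ainf k) ⧸
        LinearMap.range (Matrix.toLin' !![ax k, ay k ^ n; 0, -ax k]))
      = Ideal.span {ax k, ay k ^ n} := by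
  have hX : IsLeftRegular (MvPowerSeries.X 0 : MvPowerSeries (Fin 2) k) :=
    (IsRegular.of_ne_zero fun h => by
      simpa using congrArg (MvPowerSeries.coeff (Finsupp.single 0 1)) h).left
  refine stAnn_coker_eq_span_pair _ _ ?_ fun s => mem_span_mk_of_mk_mul_eq_zero hX
  rw [ax, ← map_mul, ← sq, Ideal.Quotient.eq_zero_iff_mem]
  exact Ideal.subset_span rfl

/-- Let `R = k⟦x,y⟧/(x²)` (char k ≠ 2) and for `n ≥ 1` let `φₙ` be the
matrix `((x, yⁿ),(0, -x))`, with `Mₙ = coker φₙ`. Then the annihilator of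
`stableHom(Mₙ, Mₙ)` equals the ideal `(x, yⁿ)R`. -/
theorem stmt7 (k : Type u) [Field k] (hchar : ringChar k ≠ 2) (n : ℕ) (hn : 1 ≤ n) :
    stAnn (Ainf k) ((Fin 2 → Ainf k) ⧸
        LinearMap.range (Matrix.toLin' !![ax k, ay k ^ n; 0, -ax k]))
      = Ideal.span {ax k, ay k ^ n} :=
  stmt7_general k n
end

section
/- Let R = k⟦x,y,z⟧/(x²+z²) with i ∈ k satisfying i²+1=0. Then the annihilator of the stable endomorphism module of R/(z−ix)R equals the ideal (x,z)R. -/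
open CategoryTheory IsLocalRing

universe u

variable (R : Type u) [CommRing R]

/-- The two-dimensional A-infinity hypersurface `k⟦x,y,z⟧/(x²+z²)`. -/
noncomputable abbrev Ainf2 (k : Type u) [Field k] : Type u :=
  (MvPowerSeries (Fin 3) k) ⧸
    (Ideal.span {(MvPowerSeries.X (0 : Fin 3) : MvPowerSeries (Fin 3) k) ^ 2 +
      MvPowerSeries.X (2 : Fin 3) ^ 2})

/-- The image of `x` in `k⟦x,y,z⟧/(x²+z²)`. -/
noncomputable def bx (k : Type u) [Field k] : Ainf2 k :=
  Ideal.Quotient.mk _ (MvPowerSeries.X 0)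

/-- The image of `z` in `k⟦x,y,z⟧/(x²+z²)`. -/
noncomputable def bz (k : Type u) [Field k] : Ainf2 k :=
  Ideal.Quotient.mk _ (MvPowerSeries.X 2)

/-! For an ideal `I`, the endomorphism `r • id` of `R ⧸ I` factors through a projective module
exactly when `r` lies in `I + Ann(I)`: lifting `1` through the projective gives an element `u ≡ r`
killed by `I`, and conversely an `r` with `r I = 0` lets `m ↦ r m` lift to `R ⧸ I → R`.
For `I = (z - ix)`, note `x² + z² = (z - ix)(z + ix)` and `k⟦x,y,z⟧` is a domain, so
`Ann(z - ix) = (z + ix)`; finally `(z - ix, z + ix) = (x, z)` because `2` and `i` are units. -/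

section StableAnnihilator

variable {R}

lemma mem_stAnn_iff_s8 {M : Type u} [AddCommGroup M] [Module R M] (r : R) :
    r ∈ stAnn R M ↔ ∀ f : M →ₗ[R] M, r • f ∈ projStable R M M := by
  simp only [stAnn, Module.mem_annihilator]
  refine ⟨fun h f => (Submodule.Quotient.mk_eq_zero _).1 (h (Submodule.Quotient.mk f)),
    fun h m => ?_⟩
  obtain ⟨f, rfl⟩ := Submodule.Quotient.mk_surjective _ m
  exact (Submodule.Quotient.mk_eq_zero _).2 (h f)

lemma annihilator_le_stAnn (M : Type u) [AddCommGroup M] [Module R M] :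
    Module.annihilator R M ≤ stAnn R M := fun r hr =>
  (mem_stAnn_iff_s8 r).2 fun f => by
    rw [show r • f = 0 from LinearMap.ext fun m => Module.mem_annihilator.1 hr (f m)]
    exact zero_mem _

lemma smul_mem_projStable_of_mem_annihilator {I : Ideal R} {N : Type u} [AddCommGroup N]
    [Module R N] {r : R} (hr : r ∈ I.annihilator) (f : R ⧸ I →ₗ[R] N) :
    r • f ∈ projStable R (R ⧸ I) N := by
  have hker : I ≤ LinearMap.ker (LinearMap.lsmul R R r) := fun s hs => by
    simpa [mul_comm] using Submodule.mem_annihilator.1 hr s hs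
  refine ⟨R, inferInstance, inferInstance, inferInstance,
    I.liftQ (LinearMap.lsmul R R r) hker, f ∘ₗ I.mkQ, ?_⟩
  ext
  change r • f (I.mkQ 1) = f (I.mkQ (I.liftQ _ hker (I.mkQ 1)))
  rw [← map_smul]
  rfl

lemma stAnn_quotient_le (I : Ideal R) : stAnn R (R ⧸ I) ≤ I ⊔ I.annihilator := by
  intro r hr
  obtain ⟨P, _, _, _, g, h, hgh⟩ := (mem_stAnn_iff_s8 r).1 hr LinearMap.id
  obtain ⟨h', hh'⟩ := Module.projective_lifting_property I.mkQ h I.mkQ_surjective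
  set u := h' (g 1)
  have hu : I.mkQ u = I.mkQ r := by
    have := LinearMap.congr_fun hgh (I.mkQ 1)
    rw [← hh'] at this
    simpa [Algebra.smul_def] using this.symm
  have hu_ann : u ∈ I.annihilator := Submodule.mem_annihilator.2 fun s hs => by
    have hs1 : s • (1 : R ⧸ I) = 0 := by
      rwa [Algebra.smul_def, mul_one, Ideal.Quotient.algebraMap_eq, Ideal.Quotient.eq_zero_iff_mem]
    have hsu : s • u = h' (g (s • 1)) := by simp only [u, map_smul]
    rw [smul_eq_mul, mul_comm, ← smul_eq_mul, hsu, hs1, map_zero, map_zero]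
  have hru : r - u ∈ I := (Submodule.Quotient.eq I).1 hu.symm
  simpa using Submodule.add_mem_sup hru hu_ann

theorem stAnn_quotient (I : Ideal R) : stAnn R (R ⧸ I) = I ⊔ I.annihilator := by
  refine le_antisymm (stAnn_quotient_le I) (sup_le ?_ fun r hr => ?_)
  · simpa [Ideal.annihilator_quotient] using annihilator_le_stAnn (R := R) (R ⧸ I)
  · exact (mem_stAnn_iff_s8 r).2 (smul_mem_projStable_of_mem_annihilator hr)

end StableAnnihilator

lemma annihilator_span_mk_of_eq_mul {S : Type*} [CommRing S] [NoZeroDivisors S] {f a b : S}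
    (hf : f = a * b) (ha : a ≠ 0) :
    (Ideal.span {Ideal.Quotient.mk (Ideal.span {f}) a}).annihilator =
      Ideal.span {Ideal.Quotient.mk (Ideal.span {f}) b} := by
  ext u
  rw [Submodule.mem_annihilator_span_singleton, smul_eq_mul, Ideal.mem_span_singleton']
  constructor
  · intro hu
    obtain ⟨U, rfl⟩ := Ideal.Quotient.mk_surjective u
    rw [← map_mul, Ideal.Quotient.eq_zero_iff_mem, Ideal.mem_span_singleton, hf] at hu
    obtain ⟨c, hc⟩ := hu
    exact ⟨Ideal.Quotient.mk _ c, by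
      rw [← map_mul, mul_left_cancel₀ ha (by linear_combination hc : a * U = a * (c * b))]⟩
  · rintro ⟨c, rfl⟩
    rw [mul_assoc, ← map_mul, mul_comm b a, ← hf,
      Ideal.Quotient.eq_zero_iff_mem.2 (Ideal.mem_span_singleton_self f), mul_zero]

lemma Ideal.span_sub_add_eq_span_pair {k A : Type*} [Field k] [CommRing A] [Algebra k A]
    (h2 : (2 : k) ≠ 0) {i : k} (hi : i ≠ 0) (x z : A) :
    Ideal.span {z - algebraMap k A i * x, z + algebraMap k A i * x} = Ideal.span {x, z} := by
  refine le_antisymm (Ideal.span_le.2 ?_) (Ideal.span_le.2 ?_) <;>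
    simp only [Set.insert_subset_iff, Set.singleton_subset_iff, SetLike.mem_coe,
      Ideal.mem_span_pair]
  · exact ⟨⟨-algebraMap k A i, 1, by ring⟩, ⟨algebraMap k A i, 1, by ring⟩⟩
  · have h2i : algebraMap k A (2 * i)⁻¹ * (2 * algebraMap k A i) = 1 := by
      rw [← map_ofNat (algebraMap k A) 2, ← map_mul, ← map_mul,
        inv_mul_cancel₀ (mul_ne_zero h2 hi), map_one]
    have h2' : algebraMap k A 2⁻¹ * 2 = 1 := by
      rw [← map_ofNat (algebraMap k A) 2, ← map_mul, inv_mul_cancel₀ h2, map_one]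
    exact ⟨⟨-algebraMap k A (2 * i)⁻¹, algebraMap k A (2 * i)⁻¹,
        by linear_combination x * h2i⟩,
      ⟨algebraMap k A 2⁻¹, algebraMap k A 2⁻¹, by linear_combination z * h2'⟩⟩

section Ainf2

open MvPowerSeries

variable {k : Type u} [Field k] {i : k}

lemma X_sq_add_X_sq_eq_mul (hi : i ^ 2 + 1 = 0) :
    (X 0 ^ 2 + X 2 ^ 2 : MvPowerSeries (Fin 3) k) = (X 2 - C i * X 0) * (X 2 + C i * X 0) := by
  have hC : (C i : MvPowerSeries (Fin 3) k) ^ 2 + 1 = 0 := by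
    rw [← map_pow, ← map_one C, ← map_add, hi, map_zero]
  linear_combination (X 0 ^ 2 : MvPowerSeries (Fin 3) k) * hC

lemma X_sub_C_mul_X_ne_zero : (X 2 - C i * X 0 : MvPowerSeries (Fin 3) k) ≠ 0 := by
  intro h
  have := congrArg (coeff (Finsupp.single (2 : Fin 3) 1)) h
  rw [map_sub, coeff_C_mul, coeff_X, coeff_X] at this
  simp [Finsupp.single_eq_single_iff] at this

lemma bz_sub_algebraMap_mul_bx (c : k) :
    bz k - algebraMap k (Ainf2 k) c * bx k = Ideal.Quotient.mk _ (X 2 - C c * X 0) := by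
  rw [map_sub, map_mul, c_eq_algebraMap, Ideal.Quotient.mk_algebraMap]
  rfl

lemma bz_add_algebraMap_mul_bx (c : k) :
    bz k + algebraMap k (Ainf2 k) c * bx k = Ideal.Quotient.mk _ (X 2 + C c * X 0) := by
  rw [map_add, map_mul, c_eq_algebraMap, Ideal.Quotient.mk_algebraMap]
  rfl

end Ainf2

/-- Let `R = k⟦x,y,z⟧/(x²+z²)` with `i ∈ k`, `i²+1 = 0` (char k ≠ 2).
Then the annihilator of the stable endomorphism module of `R/(z-ix)R` equals `(x,z)R`. -/
theorem stmt8 (k : Type u) [Field k] (hchar : ringChar k ≠ 2)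
    (i : k) (hi : i ^ 2 + 1 = 0) :
    stAnn (Ainf2 k) ((Ainf2 k) ⧸
        (Ideal.span {bz k - algebraMap k (Ainf2 k) i * bx k} : Ideal (Ainf2 k)))
      = Ideal.span {bx k, bz k} := by
  have hi0 : i ≠ 0 := by
    rintro rfl
    simp at hi
  rw [stAnn_quotient, ← Ideal.span_sub_add_eq_span_pair (Ring.two_ne_zero hchar) hi0,
    Ideal.span_insert]
  congr 1
  rw [bz_sub_algebraMap_mul_bx, bz_add_algebraMap_mul_bx]
  exact annihilator_span_mk_of_eq_mul (X_sq_add_X_sq_eq_mul hi) X_sub_C_mul_X_ne_zero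
end
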